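/- arXiv:1910.09972 — 2 statements merged into one kernel-verified Lean document; each statement's English description precedes it below -/
import Mathlib

section
/- (Proposition 1, affinity-based case, symmetry) The composition of the cross-similarity CS with the affinity-based cross-set transformation is symmetric: for every N, d, d_g, d_w : ℕ, all Θ₁, Θ₂ : Matrix (Fin d_g) (Fin d) ℝ, every W : Matrix (Fin d_w) (Fin d_g) ℝ, and all X, Y : Fin N → (Fin d → ℝ), the function F(X, Y) := CS(g_aff(X, Y), g_aff(Y, X) | W) satisfies F(X, Y) = F(Y, X). -/
open Matrix

/-- The cross-similarity of two tuples of feature vectors. -/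
noncomputable def CS {N M d dw : ℕ} (W : Matrix (Fin dw) (Fin d) ℝ)
    (X : Fin N → Fin d → ℝ) (Y : Fin M → Fin d → ℝ) : ℝ :=
  (1 / ((N : ℝ) * M)) * ∑ n : Fin N, ∑ m : Fin M,
    max 0 ((W.mulVec (X n) ⬝ᵥ W.mulVec (Y m)) / Real.sqrt dw)

/-- The affinity-based cross-set map. -/
noncomputable def gAff {N M d dg : ℕ} (Θ₁ Θ₂ : Matrix (Fin dg) (Fin d) ℝ)
    (X : Fin N → Fin d → ℝ) (Y : Fin M → Fin d → ℝ) : Fin N → Fin dg → ℝ :=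
  fun n => (1 / 2 : ℝ) • (Θ₁.mulVec (X n) + (1 / (M : ℝ)) • ∑ m : Fin M,
    max 0 ((Θ₁.mulVec (X n) ⬝ᵥ Θ₂.mulVec (Y m)) / Real.sqrt dg) • Θ₂.mulVec (Y m))

theorem CS_comm {N M d dw : ℕ} (W : Matrix (Fin dw) (Fin d) ℝ)
    (A : Fin N → Fin d → ℝ) (B : Fin M → Fin d → ℝ) :
    CS W A B = CS W B A := by
  unfold CS
  rw [mul_comm (N : ℝ), Finset.sum_comm]
  simp only [dotProduct_comm (W *ᵥ A _)]

/-- The composition of CS with the affinity-based cross-set transformation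
(with shared weights) is symmetric. -/
theorem CS_gAff_symm (N d dg dw : ℕ)
    (Θ₁ Θ₂ : Matrix (Fin dg) (Fin d) ℝ) (W : Matrix (Fin dw) (Fin dg) ℝ)
    (X Y : Fin N → Fin d → ℝ) :
    CS W (gAff Θ₁ Θ₂ X Y) (gAff Θ₁ Θ₂ Y X)
      = CS W (gAff Θ₁ Θ₂ Y X) (gAff Θ₁ Θ₂ X Y) :=
  CS_comm W _ _
end

section
/- (Proposition 1, affinity-based case, permutation invariance) The composition of the cross-similarity CS with the affinity-based cross-set transformation is permutation invariant: for every N, M, d, d_g, d_w : ℕ, all Θ₁, Θ₂ : Matrix (Fin d_g) (Fin d) ℝ, every W : Matrix (Fin d_w) (Fin d_g) ℝ, all X : Fin N → (Fin d → ℝ) and Y : Fin M → (Fin d → ℝ), and all permutations π : Equiv.Perm (Fin N) and σ : Equiv.Perm (Fin M), the function F(X, Y) := CS(g_aff(X, Y), g_aff(Y, X) | W) satisfies F(X ∘ π, Y ∘ σ) = F(X, Y). -/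
open Matrix

section Equivariance

variable {N M d : ℕ}

lemma gAff_comp_left {N' dg : ℕ} (Θ₁ Θ₂ : Matrix (Fin dg) (Fin d) ℝ)
    (X : Fin N → Fin d → ℝ) (Y : Fin M → Fin d → ℝ) (f : Fin N' → Fin N) :
    gAff Θ₁ Θ₂ (X ∘ f) Y = gAff Θ₁ Θ₂ X Y ∘ f :=
  rfl

lemma gAff_comp_perm_right {dg : ℕ} (Θ₁ Θ₂ : Matrix (Fin dg) (Fin d) ℝ)
    (X : Fin N → Fin d → ℝ) (Y : Fin M → Fin d → ℝ) (σ : Equiv.Perm (Fin M)) :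
    gAff Θ₁ Θ₂ X (Y ∘ σ) = gAff Θ₁ Θ₂ X Y := by
  funext n
  simp only [gAff, Function.comp_apply]
  rw [Equiv.sum_comp σ fun m =>
    max 0 ((Θ₁.mulVec (X n) ⬝ᵥ Θ₂.mulVec (Y m)) / Real.sqrt dg) • Θ₂.mulVec (Y m)]

lemma CS_comp_perm {dw : ℕ} (W : Matrix (Fin dw) (Fin d) ℝ)
    (X : Fin N → Fin d → ℝ) (Y : Fin M → Fin d → ℝ)
    (π : Equiv.Perm (Fin N)) (σ : Equiv.Perm (Fin M)) :
    CS W (X ∘ π) (Y ∘ σ) = CS W X Y := by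
  let k : Fin N → Fin M → ℝ := fun n m =>
    max 0 ((W.mulVec (X n) ⬝ᵥ W.mulVec (Y m)) / Real.sqrt dw)
  have hsum : ∑ n, ∑ m, k (π n) (σ m) = ∑ n, ∑ m, k n m := by
    simp only [Equiv.sum_comp σ (k _)]
    exact Equiv.sum_comp π fun n => ∑ m, k n m
  exact congrArg (1 / ((N : ℝ) * M) * ·) hsum

end Equivariance

/-- The composition of CS with the affinity-based cross-set transformation
(with shared weights) is permutation invariant. -/
theorem CS_gAff_perm_invariant (N M d dg dw : ℕ)
    (Θ₁ Θ₂ : Matrix (Fin dg) (Fin d) ℝ) (W : Matrix (Fin dw) (Fin dg) ℝ)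
    (X : Fin N → Fin d → ℝ) (Y : Fin M → Fin d → ℝ)
    (π : Equiv.Perm (Fin N)) (σ : Equiv.Perm (Fin M)) :
    CS W (gAff Θ₁ Θ₂ (X ∘ π) (Y ∘ σ)) (gAff Θ₁ Θ₂ (Y ∘ σ) (X ∘ π))
      = CS W (gAff Θ₁ Θ₂ X Y) (gAff Θ₁ Θ₂ Y X) := by
  rw [gAff_comp_left, gAff_comp_perm_right, gAff_comp_left, gAff_comp_perm_right, CS_comp_perm]
end
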